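/- arXiv:1511.08768 — 2 statements merged into one kernel-verified Lean document; each statement's English description precedes it below -/
import Mathlib

section
/- Let f : ℝⁿ → ℝ be twice continuously differentiable, let x ∈ ℝⁿ, δ > 0, and suppose the operator norm of the Hessian of f is bounded by H on the closed ball of radius δ√n around x. Let Δ be a random vector uniformly distributed on {−1,1}ⁿ. Then for every index i, the expectation of the simultaneous perturbation estimate satisfies |E[(f(x + δΔ) − f(x))/(δΔᵢ)] − (∂f/∂xᵢ)(x)| ≤ (H·n·δ)/2; i.e., the SP estimate of the i-th partial derivative is unbiased up to an O(δ) error. -/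
open scoped RealInnerProductSpace
open Finset Metric Set

/-!
Along the segment `t ↦ x + t • v`, the derivative of the first-order Taylor remainder is
`(f' (x + t • v) - f' x) v`, of norm at most `H t ‖v‖²`, so the remainder is at most `H ‖v‖² / 2`.
Each sign vector has norm `√n`, so the SP estimate equals `∑ⱼ ∂ⱼf(x) Δⱼ Δᵢ` up to an error of size
`H n δ / 2`, and averaging over the `2ⁿ` sign vectors kills the terms `j ≠ i` because distinct
coordinates of `Δ` are uncorrelated.
-/

theorem norm_sub_sub_fderiv_le_of_norm_fderiv_fderiv_le
    {E F : Type*} [NormedAddCommGroup E] [NormedSpace ℝ E] [NormedAddCommGroup F] [NormedSpace ℝ F]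
    {f : E → F} {x v : E} {H : ℝ}
    (hf : ∀ y ∈ closedBall x ‖v‖, DifferentiableAt ℝ f y)
    (hf' : ∀ y ∈ closedBall x ‖v‖, DifferentiableAt ℝ (fderiv ℝ f) y)
    (hH : ∀ y ∈ closedBall x ‖v‖, ‖fderiv ℝ (fderiv ℝ f) y‖ ≤ H) :
    ‖f (x + v) - f x - fderiv ℝ f x v‖ ≤ H * ‖v‖ ^ 2 / 2 := by
  have mem : ∀ t ∈ Icc (0 : ℝ) 1, x + t • v ∈ closedBall x ‖v‖ := fun t ht => by
    rw [mem_closedBall, dist_self_add_left, norm_smul, Real.norm_of_nonneg ht.1]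
    exact mul_le_of_le_one_left (norm_nonneg v) ht.2
  have hderiv : ∀ t ∈ Icc (0 : ℝ) 1,
      HasDerivAt (fun t : ℝ => f (x + t • v) - f x - t • fderiv ℝ f x v)
        (fderiv ℝ f (x + t • v) v - fderiv ℝ f x v) t := fun t ht => by
    have hline : HasDerivAt (fun t : ℝ => x + t • v) v t := by
      simpa using ((hasDerivAt_id t).smul_const v).const_add x
    have hcomp := (hf _ (mem t ht)).hasFDerivAt.comp_hasDerivAt t hline
    exact (hcomp.sub_const (f x)).sub
      (by simpa using (hasDerivAt_id' t).smul_const (fderiv ℝ f x v))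
  have hlip : ∀ t ∈ Icc (0 : ℝ) 1,
      ‖fderiv ℝ f (x + t • v) - fderiv ℝ f x‖ ≤ H * ‖x + t • v - x‖ :=
    fun t ht => (convex_closedBall x ‖v‖).norm_image_sub_le_of_norm_hasFDerivWithin_le
      (fun y hy => (hf' y hy).hasFDerivAt.hasFDerivWithinAt) hH
      (mem_closedBall_self (norm_nonneg v)) (mem t ht)
  have key := image_norm_le_of_norm_deriv_right_le_deriv_boundary
    (f := fun t : ℝ => f (x + t • v) - f x - t • fderiv ℝ f x v)
    (B := fun t => H * ‖v‖ ^ 2 * t ^ 2 / 2) (B' := fun t => H * ‖v‖ ^ 2 * t)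
    (a := 0) (b := 1)
    (fun t ht => (hderiv t ht).continuousAt.continuousWithinAt)
    (fun t ht => (hderiv t (Ico_subset_Icc_self ht)).hasDerivWithinAt)
    (by simp)
    (fun t => (((hasDerivAt_pow 2 t).const_mul (H * ‖v‖ ^ 2)).div_const 2).congr_deriv (by ring))
    (fun t ht => by
      have ht' := Ico_subset_Icc_self ht
      calc ‖fderiv ℝ f (x + t • v) v - fderiv ℝ f x v‖
          = ‖(fderiv ℝ f (x + t • v) - fderiv ℝ f x) v‖ := rfl
        _ ≤ ‖fderiv ℝ f (x + t • v) - fderiv ℝ f x‖ * ‖v‖ := ContinuousLinearMap.le_opNorm _ _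
        _ ≤ H * ‖x + t • v - x‖ * ‖v‖ := by gcongr; exact hlip t ht'
        _ = H * ‖v‖ ^ 2 * t := by
          rw [add_sub_cancel_left, norm_smul, Real.norm_of_nonneg ht.1]; ring)
    (right_mem_Icc.2 zero_le_one)
  simpa using key

def boolSign (b : Bool) : ℝ := if b then 1 else -1

@[simp] lemma boolSign_true : boolSign true = 1 := rfl
@[simp] lemma boolSign_false : boolSign false = -1 := rfl
@[simp] lemma boolSign_not (b : Bool) : boolSign (!b) = -boolSign b := by cases b <;> simp
@[simp] lemma boolSign_mul_self (b : Bool) : boolSign b * boolSign b = 1 := by cases b <;> simp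
@[simp] lemma abs_boolSign (b : Bool) : |boolSign b| = 1 := by cases b <;> simp

section SignVectors

variable {ι : Type*} [Fintype ι]

def signVector (s : ι → Bool) : EuclideanSpace ℝ ι := WithLp.toLp 2 fun j => boolSign (s j)

lemma norm_signVector (s : ι → Bool) : ‖signVector s‖ = √(Fintype.card ι) := by
  simp [EuclideanSpace.norm_eq, signVector]

lemma inner_signVector (w : EuclideanSpace ℝ ι) (s : ι → Bool) :
    ⟪w, signVector s⟫ = ∑ j, w j * boolSign (s j) := by
  simp [PiLp.inner_apply, signVector, mul_comm]

variable [DecidableEq ι]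

lemma sum_boolSign_mul_boolSign (i j : ι) :
    ∑ s : ι → Bool, boolSign (s i) * boolSign (s j) = if i = j then 2 ^ Fintype.card ι else 0 := by
  split_ifs with hij
  · subst hij
    simp
  · -- flipping the `i`-th coordinate is a bijection that negates every summand
    let flip : (ι → Bool) ≃ (ι → Bool) :=
      Equiv.piCongrRight fun k => if k = i then Equiv.boolNot else Equiv.refl Bool
    have hneg := Fintype.sum_equiv flip (fun s => -(boolSign (s i) * boolSign (s j)))
      (fun s => boolSign (s i) * boolSign (s j)) fun s => by simp [flip, Ne.symm hij]
    rw [sum_neg_distrib] at hneg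
    linarith

lemma sum_inner_signVector_mul_boolSign (w : EuclideanSpace ℝ ι) (i : ι) :
    ∑ s : ι → Bool, ⟪w, signVector s⟫ * boolSign (s i) = 2 ^ Fintype.card ι * w i := by
  simp_rw [inner_signVector, sum_mul, mul_assoc]
  rw [sum_comm]
  simp_rw [← mul_sum, sum_boolSign_mul_boolSign]
  simp [mul_comm]

end SignVectors

/-- Near-unbiasedness of the simultaneous perturbation estimate:
if `Δ` is uniformly distributed on `{-1,1}ⁿ` (encoded by `s : Fin n → Bool` with
sign `if s j then 1 else -1`, so the expectation is the average over all `2ⁿ`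
sign vectors) and the Hessian of `f` has operator norm at most `H` on the closed
ball of radius `δ√n` around `x`, then the expectation of the SP estimate of the
`i`-th partial derivative is within `Hnδ/2` of `∂f/∂xᵢ(x)`. -/
theorem stmt_2 (n : ℕ) (f : EuclideanSpace ℝ (Fin n) → ℝ) (hf : ContDiff ℝ 2 f)
    (x : EuclideanSpace ℝ (Fin n)) (δ H : ℝ) (hδ : 0 < δ)
    (hH : ∀ y ∈ Metric.closedBall x (δ * Real.sqrt n),
      ‖fderiv ℝ (fderiv ℝ f) y‖ ≤ H)
    (i : Fin n) :
    |(∑ s : Fin n → Bool,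
        (f (x + δ • (WithLp.equiv 2 (Fin n → ℝ)).symm
            (fun j => if s j then (1 : ℝ) else -1)) - f x) /
          (δ * (if s i then (1 : ℝ) else -1))) / 2 ^ n -
      gradient f x i| ≤ H * n * δ / 2 := by
  change |(∑ s : Fin n → Bool, (f (x + δ • signVector s) - f x) / (δ * boolSign (s i))) / 2 ^ n
    - gradient f x i| ≤ _
  have hf₁ : Differentiable ℝ f := hf.differentiable (by norm_num)
  have hf₂ : Differentiable ℝ (fderiv ℝ f) :=
    (hf.fderiv_right (m := 1) le_rfl).differentiable (by norm_num)
  have hnorm (s : Fin n → Bool) : ‖δ • signVector s‖ = δ * √n := by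
    simp [norm_smul, norm_signVector, abs_of_pos hδ]
  have taylor (s : Fin n → Bool) :
      |f (x + δ • signVector s) - f x - δ * ⟪gradient f x, signVector s⟫| ≤ H * n * δ ^ 2 / 2 := by
    have h := norm_sub_sub_fderiv_le_of_norm_fderiv_fderiv_le (fun y _ => hf₁ y) (fun y _ => hf₂ y)
      (by rwa [hnorm s])
    rw [hnorm, ← inner_gradient_left, inner_smul_right, mul_pow, Real.sq_sqrt n.cast_nonneg,
      Real.norm_eq_abs] at h
    linarith
  have hterm (s : Fin n → Bool) :
      (f (x + δ • signVector s) - f x) / (δ * boolSign (s i))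
        - ⟪gradient f x, signVector s⟫ * boolSign (s i)
      = (f (x + δ • signVector s) - f x - δ * ⟪gradient f x, signVector s⟫)
          * boolSign (s i) / δ := by
    have hσ := boolSign_mul_self (s i)
    have hσ₀ : boolSign (s i) ≠ 0 := left_ne_zero_of_mul_eq_one hσ
    field_simp
    linear_combination (f x - f (x + δ • signVector s)) * hσ
  have h2n : (0 : ℝ) < 2 ^ n := by positivity
  calc _ = |∑ s : Fin n → Bool, ((f (x + δ • signVector s) - f x) / (δ * boolSign (s i))
          - ⟪gradient f x, signVector s⟫ * boolSign (s i))| / 2 ^ n := by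
        rw [sum_sub_distrib, sum_inner_signVector_mul_boolSign, Fintype.card_fin,
          div_sub' h2n.ne', abs_div, abs_of_pos h2n]
    _ ≤ (∑ _s : Fin n → Bool, H * n * δ / 2) / 2 ^ n := by
        gcongr
        refine (abs_sum_le_sum_abs _ _).trans (sum_le_sum fun s _ => ?_)
        rw [hterm, abs_div, abs_mul, abs_boolSign, mul_one, abs_of_pos hδ, div_le_iff₀ hδ]
        linarith [taylor s]
    _ = H * n * δ / 2 := by simp
end

section
/- Let f : ℝⁿ → ℝ be continuously differentiable and bounded below, let ε₀ ≥ 0, and let x : [0, ∞) → ℝⁿ be continuously differentiable with x′(t) = −∇f(x(t)) + η(t), where ‖η(t)‖₂ ≤ ε₀ for all t ≥ 0. Then for every c > 0 there exists a time t ≥ 0 such that ‖∇f(x(t))‖₂ < ε₀ + c; i.e., the perturbed gradient flow trajectory comes arbitrarily close to the set {x : ‖∇f(x)‖₂ ≤ ε₀}. -/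
/-!
Suppose `‖∇f(x(t))‖ ≥ ‖η(t)‖ + c` for all `t ≥ 0`. Along the flow,
`d/dt f(x(t)) = ⟪∇f, -∇f + η⟫ ≤ -‖∇f‖ (‖∇f‖ - ‖η‖) ≤ -c²`, so `f(x(t)) ≤ f(x(0)) - c² t`
tends to `-∞`, contradicting that `f` is bounded below.
-/

open Set
open scoped Gradient RealInnerProductSpace

theorem not_bddBelow_image_Ici_of_hasDerivAt_le_neg {g g' : ℝ → ℝ} {a K : ℝ} (hK : 0 < K)
    (hg : ∀ t, a ≤ t → HasDerivAt g (g' t) t) (hg' : ∀ t, a ≤ t → g' t ≤ -K) :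
    ¬ BddBelow (g '' Ici a) := by
  have hdecay : ∀ T, a ≤ T → g T - g a ≤ -K * (T - a) := fun T hT ↦
    (convex_Ici a).image_sub_le_mul_sub_of_deriv_le
      (fun t ht ↦ (hg t ht).continuousAt.continuousWithinAt)
      (fun t ht ↦ (hg t (interior_subset ht)).differentiableAt.differentiableWithinAt)
      (fun t ht ↦ (hg t (interior_subset ht)).deriv ▸ hg' t (interior_subset ht))
      a (mem_Ici.2 le_rfl) T hT hT
  rintro ⟨b, hb⟩
  set T := a + |g a - b| / K + 1
  have hT : K * (T - a) = |g a - b| + K := by simp only [T]; field_simp; ring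
  have hTa : a ≤ T := by
    have : 0 ≤ |g a - b| / K := by positivity
    linarith
  linarith [hb ⟨T, hTa, rfl⟩, hdecay T hTa, le_abs_self (g a - b)]

section

variable {E : Type*} [NormedAddCommGroup E] [InnerProductSpace ℝ E]

theorem inner_neg_self_add_le_neg_sq {g η : E} {c : ℝ} (hc : 0 ≤ c) (h : ‖η‖ + c ≤ ‖g‖) :
    ⟪g, -g + η⟫ ≤ -c ^ 2 := by
  have hη : ⟪g, η⟫ ≤ ‖g‖ * ‖η‖ := real_inner_le_norm g η
  have hsq : c * c ≤ ‖g‖ * (‖g‖ - ‖η‖) :=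
    mul_le_mul (by linarith [norm_nonneg η]) (by linarith) hc (norm_nonneg g)
  rw [inner_add_right, inner_neg_right, real_inner_self_eq_norm_sq]
  nlinarith

theorem HasGradientAt.comp_hasDerivAt [CompleteSpace E] {f : E → ℝ} {f' : E} {x : ℝ → E}
    {v : E} {t : ℝ} (hf : HasGradientAt f f' (x t)) (hx : HasDerivAt x v t) :
    HasDerivAt (f ∘ x) ⟪f', v⟫ t := by
  simpa only [InnerProductSpace.toDual_apply_apply] using
    hf.hasFDerivAt.comp_hasDerivAt t hx

theorem exists_norm_gradient_lt_norm_add_of_perturbed_gradient_flow [CompleteSpace E]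
    {f : E → ℝ} (hf : Differentiable ℝ f) (hbdd : BddBelow (range f)) {x η : ℝ → E}
    (hx : ∀ t, 0 ≤ t → HasDerivAt x (-∇ f (x t) + η t) t) {c : ℝ} (hc : 0 < c) :
    ∃ t ≥ 0, ‖∇ f (x t)‖ < ‖η t‖ + c := by
  by_contra! hfar
  refine not_bddBelow_image_Ici_of_hasDerivAt_le_neg (pow_pos hc 2)
    (fun t ht ↦ (hf (x t)).hasGradientAt.comp_hasDerivAt (hx t ht))
    (fun t ht ↦ inner_neg_self_add_le_neg_sq hc.le (hfar t ht)) ?_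
  exact hbdd.mono (image_subset_iff.2 fun t _ ↦ mem_range_self (x t))

end

theorem stmt_16_general (n : ℕ) (f : EuclideanSpace ℝ (Fin n) → ℝ) (hf : ContDiff ℝ 1 f)
    (hbdd : BddBelow (Set.range f)) (ε₀ : ℝ)
    (x η : ℝ → EuclideanSpace ℝ (Fin n))
    (hx : ∀ t, 0 ≤ t → HasDerivAt x (-gradient f (x t) + η t) t)
    (hηb : ∀ t, 0 ≤ t → ‖η t‖ ≤ ε₀) :
    ∀ c > 0, ∃ t ≥ (0 : ℝ), ‖gradient f (x t)‖ < ε₀ + c := by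
  intro c hc
  obtain ⟨t, ht, hlt⟩ := exists_norm_gradient_lt_norm_add_of_perturbed_gradient_flow
    (hf.differentiable one_ne_zero) hbdd hx hc
  exact ⟨t, ht, hlt.trans_le (by linarith [hηb t ht])⟩

/-- If `f` is continuously differentiable and bounded below,
and `x` is a continuously differentiable solution on `[0, ∞)` of the perturbed
gradient flow `x'(t) = -∇f(x(t)) + η(t)` with `‖η(t)‖₂ ≤ ε₀`, then for every
`c > 0` there is a time `t ≥ 0` with `‖∇f(x(t))‖₂ < ε₀ + c`; i.e. the
trajectory comes arbitrarily close to the set `{x : ‖∇f(x)‖₂ ≤ ε₀}`. -/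
theorem stmt_16 (n : ℕ) (f : EuclideanSpace ℝ (Fin n) → ℝ) (hf : ContDiff ℝ 1 f)
    (hbdd : BddBelow (Set.range f)) (ε₀ : ℝ) (hε₀ : 0 ≤ ε₀)
    (x η : ℝ → EuclideanSpace ℝ (Fin n)) (hη_cont : Continuous η)
    (hx : ∀ t, 0 ≤ t → HasDerivAt x (-gradient f (x t) + η t) t)
    (hηb : ∀ t, 0 ≤ t → ‖η t‖ ≤ ε₀) :
    ∀ c > 0, ∃ t ≥ (0 : ℝ), ‖gradient f (x t)‖ < ε₀ + c :=
  stmt_16_general n f hf hbdd ε₀ x η hx hηb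
end
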